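/- Let W, Ŵ ∈ ℝ^{n×n} be nonnegative with Ŵ obtained from W by appending edges (Ŵ_{ij} ≥ W_{ij} for all i, j, and Ŵ_{ij} = W_{ij} whenever W_{ij} > 0), and suppose every row sum d_i^out = ∑_j W_{ij} is positive and every column sum d̂_j^in = ∑_i Ŵ_{ij} is positive. Let P and P̂ be the transition matrices of W and Ŵ, ρ = max_i (d̂_i^out − d_i^out)/d_i^out, and σ = max over pairs (i,j) with Ŵ_{ij} > 0 of d̂_j^in/d̂_i^out. Then the spectral norm (operator 2-norm) of the perturbation R = P̂ − P satisfies ‖R‖₂ ≤ √(2σρ). -/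

import Mathlib

/-!
On row `i`, the old edges keep their weights, so their transition probabilities shrink by the
factor `dᵢ/d̂ᵢ`, and the new edges carry the remaining mass `(d̂ᵢ - dᵢ)/d̂ᵢ`. Hence the absolute row
sums of `R = P̂ - P` equal `2 (d̂ᵢ - dᵢ)/d̂ᵢ ≤ 2ρ/(1+ρ)`, while entrywise
`|Rᵢⱼ| ≤ (1+ρ) P̂ᵢⱼ ≤ (1+ρ) σ Ŵᵢⱼ/d̂ⱼⁱⁿ`, so the absolute column sums are at most `(1+ρ)σ`.
The Schur test `‖R‖₂² ≤ (max absolute row sum)(max absolute column sum)` gives `‖R‖₂² ≤ 2σρ`.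
-/

open Matrix Finset
open scoped Matrix.Norms.L2Operator

namespace Matrix

variable {m n : Type*} [Fintype n]

lemma sq_mulVec_apply_le (R : Matrix m n ℝ) (x : n → ℝ) (i : m) :
    (R *ᵥ x) i ^ 2 ≤ (∑ j, |R i j|) * ∑ j, |R i j| * x j ^ 2 :=
  calc (R *ᵥ x) i ^ 2 ≤ (∑ j, |R i j| * |x j|) ^ 2 := by
        rw [← sq_abs]
        gcongr
        simpa only [mulVec, dotProduct, abs_mul] using abs_sum_le_sum_abs (fun j => R i j * x j) univ
    _ ≤ _ := sum_sq_le_sum_mul_sum_of_sq_le_mul _ (fun j _ => abs_nonneg _)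
        (fun j _ => by positivity) fun j _ => by rw [mul_pow, sq_abs (x j), sq, mul_assoc]

lemma sum_sq_mulVec_le [Fintype m] {R : Matrix m n ℝ} {a b : ℝ} (ha : 0 ≤ a)
    (hrow : ∀ i, ∑ j, |R i j| ≤ a) (hcol : ∀ j, ∑ i, |R i j| ≤ b) (x : n → ℝ) :
    ∑ i, (R *ᵥ x) i ^ 2 ≤ a * b * ∑ j, x j ^ 2 :=
  calc ∑ i, (R *ᵥ x) i ^ 2 ≤ ∑ i, a * ∑ j, |R i j| * x j ^ 2 := by
        gcongr with i
        exact (sq_mulVec_apply_le R x i).trans (by gcongr; exact hrow i)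
    _ = a * ∑ j, (∑ i, |R i j|) * x j ^ 2 := by
        rw [← mul_sum, sum_comm]
        simp only [sum_mul]
    _ ≤ a * ∑ j, b * x j ^ 2 := by gcongr with j; exact hcol j
    _ = a * b * ∑ j, x j ^ 2 := by rw [← mul_sum, mul_assoc]

/-- The Schur test. -/
theorem l2_opNorm_le_sqrt_mul_of_sum_abs_le [Fintype m] [DecidableEq n] {R : Matrix m n ℝ}
    {a b : ℝ} (ha : 0 ≤ a) (hrow : ∀ i, ∑ j, |R i j| ≤ a) (hcol : ∀ j, ∑ i, |R i j| ≤ b) :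
    ‖R‖ ≤ √(a * b) := by
  rw [l2_opNorm_def]
  refine ContinuousLinearMap.opNorm_le_bound _ (Real.sqrt_nonneg _) fun x => ?_
  rw [EuclideanSpace.norm_eq, EuclideanSpace.norm_eq, ← Real.sqrt_mul' _ (by positivity)]
  gcongr
  simp only [Real.norm_eq_abs, sq_abs]
  exact sum_sq_mulVec_le ha hrow hcol x

end Matrix

lemma abs_div_sub_div_eq {w w' d d' : ℝ} (hw : 0 ≤ w) (hle : w ≤ w') (hsupp : 0 < w → w' = w)
    (hd : 0 < d) (hdd : d ≤ d') :
    |w' / d' - w / d| = w' / d' + w / d - 2 * (w / d') := by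
  rcases hw.lt_or_eq with hw | rfl
  · have : w / d' ≤ w / d := div_le_div_of_nonneg_left hw.le hd hdd
    rw [hsupp hw, abs_of_nonpos (by linarith)]
    ring
  · rw [zero_div, sub_zero, abs_of_nonneg (div_nonneg hle (hd.trans_le hdd).le)]
    ring

lemma abs_div_sub_div_le {w w' d d' ρ : ℝ} (hw : 0 ≤ w) (hle : w ≤ w') (hsupp : 0 < w → w' = w)
    (hd : 0 < d) (hdd : d ≤ d') (hρ : (d' - d) / d ≤ ρ) :
    |w' / d' - w / d| ≤ (1 + ρ) * (w' / d') := by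
  have hd' : 0 < d' := hd.trans_le hdd
  have hloss : w / d - w / d' = w / d' * ((d' - d) / d) := by field_simp
  calc |w' / d' - w / d| = w' / d' + w / d - 2 * (w / d') := abs_div_sub_div_eq hw hle hsupp hd hdd
    _ ≤ w' / d' + w / d' * ((d' - d) / d) := by linarith [div_nonneg hw hd'.le]
    _ ≤ w' / d' + w' / d' * ρ := by
        gcongr
        exact div_nonneg (hw.trans hle) hd'.le
    _ = (1 + ρ) * (w' / d') := by ring

lemma sub_div_le_div_one_add {d d' ρ : ℝ} (hd : 0 < d) (hdd : d ≤ d') (hρ : (d' - d) / d ≤ ρ) :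
    (d' - d) / d' ≤ ρ / (1 + ρ) := by
  have hρ₀ : 0 ≤ ρ := (div_nonneg (sub_nonneg.2 hdd) hd.le).trans hρ
  rw [div_le_iff₀ hd] at hρ
  rw [div_le_div_iff₀ (by linarith) (by linarith)]
  nlinarith

section Transition

variable {m n : Type*} [Fintype n]

noncomputable def transitionMatrix (W : Matrix m n ℝ) : Matrix m n ℝ :=
  of fun i j => W i j / ∑ t, W i t

lemma transitionMatrix_apply (W : Matrix m n ℝ) (i : m) (j : n) :
    transitionMatrix W i j = W i j / ∑ t, W i t := rfl

lemma sum_abs_transitionMatrix_sub_apply {W W' : Matrix m n ℝ} {i : m} (hW : ∀ j, 0 ≤ W i j)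
    (hle : ∀ j, W i j ≤ W' i j) (hsupp : ∀ j, 0 < W i j → W' i j = W i j)
    (hdeg : 0 < ∑ j, W i j) :
    ∑ j, |(transitionMatrix W' - transitionMatrix W) i j| =
      2 * ((∑ j, W' i j - ∑ j, W i j) / ∑ j, W' i j) := by
  have hdeg_le : ∑ j, W i j ≤ ∑ j, W' i j := sum_le_sum fun j _ => hle j
  have hdeg' : 0 < ∑ j, W' i j := hdeg.trans_le hdeg_le
  simp only [Matrix.sub_apply, transitionMatrix_apply,
    fun j => abs_div_sub_div_eq (hW j) (hle j) (hsupp j) hdeg hdeg_le,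
    sum_sub_distrib, sum_add_distrib, ← mul_sum, ← sum_div, div_self hdeg'.ne', div_self hdeg.ne']
  field_simp
  ring

lemma abs_transitionMatrix_sub_apply_le {W W' : Matrix m n ℝ} {i : m} {ρ : ℝ}
    (hW : ∀ j, 0 ≤ W i j) (hle : ∀ j, W i j ≤ W' i j) (hsupp : ∀ j, 0 < W i j → W' i j = W i j)
    (hdeg : 0 < ∑ j, W i j) (hρ : (∑ j, W' i j - ∑ j, W i j) / ∑ j, W i j ≤ ρ) (j : n) :
    |(transitionMatrix W' - transitionMatrix W) i j| ≤ (1 + ρ) * transitionMatrix W' i j :=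
  abs_div_sub_div_le (hW j) (hle j) (hsupp j) hdeg (sum_le_sum fun j _ => hle j) hρ

lemma sum_transitionMatrix_apply_le [Fintype m] {W : Matrix m n ℝ} {j : n} {σ : ℝ}
    (hW : ∀ i, 0 ≤ W i j) (hcol : 0 < ∑ i, W i j)
    (hσ : ∀ i, 0 < W i j → (∑ s, W s j) / (∑ t, W i t) ≤ σ) :
    ∑ i, transitionMatrix W i j ≤ σ :=
  calc ∑ i, transitionMatrix W i j ≤ ∑ i, σ * (W i j / ∑ s, W s j) := by
        gcongr with i
        rcases (hW i).lt_or_eq with hpos | hzero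
        · calc transitionMatrix W i j = (∑ s, W s j) / (∑ t, W i t) * (W i j / ∑ s, W s j) := by
                rw [transitionMatrix_apply, div_mul_div_comm, mul_comm,
                  mul_div_mul_right _ _ hcol.ne']
            _ ≤ σ * (W i j / ∑ s, W s j) := by
                gcongr
                exact hσ i hpos
        · simp [transitionMatrix_apply, ← hzero]
    _ = σ := by rw [← mul_sum, ← sum_div, div_self hcol.ne', mul_one]

end Transition

theorem spectral_norm_perturbation_bound_general
    {n : ℕ}
    (W What : Matrix (Fin n) (Fin n) ℝ)
    (hWnonneg : ∀ i j, 0 ≤ W i j)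
    (hle : ∀ i j, W i j ≤ What i j)
    (hsupp : ∀ i j, 0 < W i j → What i j = W i j)
    (hdeg : ∀ i, 0 < ∑ j, W i j)
    (hcol : ∀ j, 0 < ∑ i, What i j)
    (P Phat : Matrix (Fin n) (Fin n) ℝ)
    (hP : ∀ i j, P i j = W i j / ∑ t, W i t)
    (hPhat : ∀ i j, Phat i j = What i j / ∑ t, What i t)
    (ρ : ℝ)
    (hρ : IsGreatest (Set.range fun i : Fin n =>
      ((∑ j, What i j) - ∑ j, W i j) / ∑ j, W i j) ρ)
    (σ : ℝ)
    (hσ : IsGreatest {x : ℝ | ∃ i j, 0 < What i j ∧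
      x = (∑ s, What s j) / (∑ t, What i t)} σ) :
    ‖Phat - P‖ ≤ Real.sqrt (2 * σ * ρ) := by
  obtain rfl : P = transitionMatrix W := Matrix.ext fun i j => hP i j
  obtain rfl : Phat = transitionMatrix What := Matrix.ext fun i j => hPhat i j
  have hρ_ge i : ((∑ j, What i j) - ∑ j, W i j) / ∑ j, W i j ≤ ρ := hρ.2 ⟨i, rfl⟩
  have hρ₀ : 0 ≤ ρ := by
    obtain ⟨i, hi⟩ := hρ.1
    exact hi ▸ div_nonneg (sub_nonneg.2 (sum_le_sum fun j _ => hle i j)) (hdeg i).le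
  have hrow i : ∑ j, |(transitionMatrix What - transitionMatrix W) i j| ≤ 2 * (ρ / (1 + ρ)) := by
    rw [sum_abs_transitionMatrix_sub_apply (hWnonneg i) (hle i) (hsupp i) (hdeg i)]
    gcongr 2 * ?_
    exact sub_div_le_div_one_add (hdeg i) (sum_le_sum fun j _ => hle i j) (hρ_ge i)
  have hcolsum j : ∑ i, |(transitionMatrix What - transitionMatrix W) i j| ≤ (1 + ρ) * σ :=
    calc _ ≤ ∑ i, (1 + ρ) * transitionMatrix What i j := sum_le_sum fun i _ =>
          abs_transitionMatrix_sub_apply_le (hWnonneg i) (hle i) (hsupp i) (hdeg i) (hρ_ge i) j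
      _ ≤ (1 + ρ) * σ := by
          rw [← mul_sum]
          gcongr
          exact sum_transitionMatrix_apply_le (fun i => (hWnonneg i j).trans (hle i j)) (hcol j)
            fun i h => hσ.2 ⟨i, j, h, rfl⟩
  calc _ ≤ √(2 * (ρ / (1 + ρ)) * ((1 + ρ) * σ)) :=
        Matrix.l2_opNorm_le_sqrt_mul_of_sum_abs_le (by positivity) hrow hcolsum
    _ = √(2 * σ * ρ) := by
        congr 1
        field_simp

/-- **Spectral norm bound on the perturbation of the transition matrix.**
Let `Ŵ` be obtained from `W` by appending edges (`Ŵ ≥ W` entrywise, agreeing with `W` on the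
support of `W`), with all row sums of `W` positive and all column sums of `Ŵ` positive. With
`P`, `P̂` the transition matrices, `ρ = max_i (d̂ᵢᵒᵘᵗ − dᵢᵒᵘᵗ)/dᵢᵒᵘᵗ` and
`σ = max over (i,j) with Ŵᵢⱼ > 0 of d̂ⱼⁱⁿ/d̂ᵢᵒᵘᵗ`, the spectral norm (operator 2-norm,
here via the scoped `Matrix.L2OpNorm` instance) of `R = P̂ − P` satisfies `‖R‖₂ ≤ √(2σρ)`. -/
theorem spectral_norm_perturbation_bound
    {n : ℕ} (hn : 0 < n)
    (W What : Matrix (Fin n) (Fin n) ℝ)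
    (hWnonneg : ∀ i j, 0 ≤ W i j)
    (hle : ∀ i j, W i j ≤ What i j)
    (hsupp : ∀ i j, 0 < W i j → What i j = W i j)
    (hdeg : ∀ i, 0 < ∑ j, W i j)
    (hcol : ∀ j, 0 < ∑ i, What i j)
    (P Phat : Matrix (Fin n) (Fin n) ℝ)
    (hP : ∀ i j, P i j = W i j / ∑ t, W i t)
    (hPhat : ∀ i j, Phat i j = What i j / ∑ t, What i t)
    (ρ : ℝ)
    (hρ : IsGreatest (Set.range fun i : Fin n =>
      ((∑ j, What i j) - ∑ j, W i j) / ∑ j, W i j) ρ)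
    (σ : ℝ)
    (hσ : IsGreatest {x : ℝ | ∃ i j, 0 < What i j ∧
      x = (∑ s, What s j) / (∑ t, What i t)} σ) :
    ‖Phat - P‖ ≤ Real.sqrt (2 * σ * ρ) :=
  spectral_norm_perturbation_bound_general W What hWnonneg hle hsupp hdeg hcol P Phat hP hPhat ρ hρ
    σ hσ
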